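/- arXiv:1004.1132 — 5 statements merged into one kernel-verified Lean document; each statement's English description precedes it below -/
import Mathlib

section
/- Let φ : ℝ → 𝔤 be continuous and let F be a fundamental solution of the Euler system associated to φ. Then each F(t) preserves the Lie bracket: [F(t)x, F(t)y] = F(t)[x,y] for all t ∈ ℝ and all x, y ∈ 𝔤. -/
/-!
The defect `g t = [F t x, F t y] - F t [x, y]` vanishes at `t = 0`. The Jacobi identity makes
`-ad (φ t)` a derivation of the bracket, so `g` solves the same linear equation
`g' = -ad (φ t) g` as `t ↦ F t z`, and uniqueness for linear ODEs with continuous coefficients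
forces `g = 0`.
-/

open Set

theorem LinearMap.IsAlt.leibniz_of_jacobi {R M : Type*} [CommRing R] [AddCommGroup M]
    [Module R M] {B : M →ₗ[R] M →ₗ[R] M} (hB : B.IsAlt)
    (hjac : ∀ x y z, B x (B y z) + B y (B z x) + B z (B x y) = 0) (p a b : M) :
    B p (B a b) = B (B p a) b + B a (B p b) := by
  have h := hjac p a b
  rw [← hB.neg (B p a) b, ← hB.neg p b, map_neg] at h
  rw [← sub_eq_zero, ← h]
  abel

theorem eq_zero_of_hasDerivAt_clm_apply {E : Type*} [NormedAddCommGroup E] [NormedSpace ℝ E]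
    {A : ℝ → E →L[ℝ] E} (hA : Continuous A) {g : ℝ → E} {t₀ : ℝ}
    (hg : ∀ t, HasDerivAt g (A t (g t)) t) (hg₀ : g t₀ = 0) (t : ℝ) : g t = 0 := by
  set a := min t t₀ - 1
  set b := max t t₀ + 1
  -- `A` is bounded on the compact interval `[a, b]`, so the vector fields `A s` share a
  -- Lipschitz constant there.
  obtain ⟨K, hK⟩ := (isCompact_Icc (a := a) (b := b)).bddAbove_image
    (continuous_nnnorm.comp hA).continuousOn
  have hlip : ∀ s ∈ Ioo a b, LipschitzOnWith K (A s) univ := fun s hs =>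
    ((A s).lipschitz.weaken (hK ⟨s, Ioo_subset_Icc_self hs, rfl⟩)).lipschitzOnWith
  have hzero : ∀ s ∈ Ioo a b, HasDerivAt (fun _ => (0 : E)) (A s 0) s := fun s _ => by
    simpa using hasDerivAt_const s (0 : E)
  have hgc : Continuous g := continuous_iff_continuousAt.2 fun s => (hg s).continuousAt
  have ht₀ : t₀ ∈ Ioo a b :=
    ⟨by linarith [min_le_right t t₀], by linarith [le_max_right t t₀]⟩
  exact ODE_solution_unique_of_mem_Icc hlip ht₀ hgc.continuousOn (fun s _ => hg s)
    (fun _ _ => mem_univ _) continuousOn_const hzero (fun _ _ => mem_univ _) hg₀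
    ⟨by linarith [min_le_left t t₀], by linarith [le_max_left t t₀]⟩

theorem hasDerivAt_apply_sub_apply_of_derivation {𝕜 E : Type*} [NontriviallyNormedField 𝕜]
    [NormedAddCommGroup E] [NormedSpace 𝕜 E] {B : E →L[𝕜] E →L[𝕜] E} {D : E →L[𝕜] E}
    (hD : ∀ a b, D (B a b) = B (D a) b + B a (D b)) {F : 𝕜 → E →L[𝕜] E} {t : 𝕜}
    (hF : HasDerivAt F (D.comp (F t)) t) (x y : E) :
    HasDerivAt (fun s => B (F s x) (F s y) - F s (B x y))
      (D (B (F t x) (F t y) - F t (B x y))) t := by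
  have hFapp : ∀ z, HasDerivAt (fun s => F s z) (D (F t z)) t := fun z => by
    simpa using hF.clm_apply (hasDerivAt_const t z)
  rw [map_sub, hD, add_comm]
  exact (B.hasDerivAt_of_bilinear (fun _ => hFapp x) (fun _ => hFapp y)).sub (hFapp (B x y))

theorem fundamental_solution_preserves_bracket_general
    {L : Type*} [NormedAddCommGroup L] [NormedSpace ℝ L]
    (bracket : L →L[ℝ] L →L[ℝ] L)
    (halt : ∀ x : L, bracket x x = 0)
    (hjac : ∀ x y z : L,
      bracket x (bracket y z) + bracket y (bracket z x) + bracket z (bracket x y) = 0)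
    (φ : ℝ → L) (hφ : Continuous φ)
    (F : ℝ → L →L[ℝ] L)
    (hF : ∀ t : ℝ, HasDerivAt F (-((bracket (φ t)).comp (F t))) t)
    (hF0 : F 0 = ContinuousLinearMap.id ℝ L) :
    ∀ (t : ℝ) (x y : L), bracket (F t x) (F t y) = F t (bracket x y) := by
  have hleib : ∀ p a b,
      bracket p (bracket a b) = bracket (bracket p a) b + bracket a (bracket p b) :=
    LinearMap.IsAlt.leibniz_of_jacobi (B := bracket.toLinearMap₁₂) halt hjac
  have hder : ∀ s a b, (-bracket (φ s)) (bracket a b)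
      = bracket ((-bracket (φ s)) a) b + bracket a ((-bracket (φ s)) b) := fun s a b => by
    simp only [neg_apply, map_neg]
    rw [hleib, neg_add]
  have hdefect (s : ℝ) (x y : L) := hasDerivAt_apply_sub_apply_of_derivation (hder s)
    (by rw [ContinuousLinearMap.neg_comp]; exact hF s) x y
  intro t x y
  refine sub_eq_zero.1 (eq_zero_of_hasDerivAt_clm_apply (t₀ := 0)
    (bracket.continuous.comp hφ).neg (fun s => hdefect s x y) ?_ t)
  simp [hF0]

/-- Let `φ : ℝ → L` be continuous and let `F` be a fundamental
solution of the Euler system associated to `φ` (i.e. `F′(t) = −ad(φ(t)) ∘ F(t)`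
and `F(0) = id`) on a finite-dimensional real Lie algebra `L`.  Then each
`F(t)` preserves the Lie bracket: `[F(t)x, F(t)y] = F(t)[x, y]` for all `t ∈ ℝ`
and all `x, y ∈ L`. -/
theorem fundamental_solution_preserves_bracket
    {L : Type*} [NormedAddCommGroup L] [NormedSpace ℝ L] [FiniteDimensional ℝ L]
    (bracket : L →L[ℝ] L →L[ℝ] L)
    (halt : ∀ x : L, bracket x x = 0)
    (hjac : ∀ x y z : L,
      bracket x (bracket y z) + bracket y (bracket z x) + bracket z (bracket x y) = 0)
    (φ : ℝ → L) (hφ : Continuous φ)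
    (F : ℝ → L →L[ℝ] L)
    (hF : ∀ t : ℝ, HasDerivAt F (-((bracket (φ t)).comp (F t))) t)
    (hF0 : F 0 = ContinuousLinearMap.id ℝ L) :
    ∀ (t : ℝ) (x y : L), bracket (F t x) (F t y) = F t (bracket x y) :=
  fundamental_solution_preserves_bracket_general bracket halt hjac φ hφ F hF hF0
end

section
/- Let φ : ℝ → 𝔤 be continuous and let ξ be a solution of the Euler system associated to φ whose initial value ξ(0) lies in the center of 𝔤. Then ξ is constant: ξ(t) = ξ(0) for all t ∈ ℝ. -/
/-!
Both `ξ` and the constant curve `ξ 0` solve the linear equation `x' = -[φ t, x]`, the latter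
because `ξ 0` is central. A linear equation with continuous coefficients is Lipschitz in `x`
uniformly on every compact time interval, so its solutions are determined by one value.
-/

open Set

theorem ODE_linear_solution_unique {E : Type*} [NormedAddCommGroup E] [NormedSpace ℝ E]
    {A : ℝ → E →L[ℝ] E} (hA : Continuous A) {f g : ℝ → E} {t₀ : ℝ}
    (hf : ∀ t, HasDerivAt f (A t (f t)) t) (hg : ∀ t, HasDerivAt g (A t (g t)) t)
    (heq : f t₀ = g t₀) : f = g := by
  ext t
  obtain ⟨a, b, ht, ht₀⟩ : ∃ a b, t ∈ Ioo a b ∧ t₀ ∈ Ioo a b :=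
    ⟨min t t₀ - 1, max t t₀ + 1, by grind, by grind⟩
  obtain ⟨C, hC⟩ := (isCompact_Icc (a := a) (b := b)).exists_bound_of_continuousOn hA.continuousOn
  have hlip : ∀ s ∈ Ioo a b, LipschitzOnWith C.toNNReal (A s) univ := fun s hs =>
    ((A s).lipschitz.weaken <| by
      rw [← NNReal.coe_le_coe, coe_nnnorm]
      exact (hC s (Ioo_subset_Icc_self hs)).trans (Real.le_coe_toNNReal C)).lipschitzOnWith
  exact ODE_solution_unique_of_mem_Ioo hlip ht₀ (fun s _ => ⟨hf s, mem_univ _⟩)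
    (fun s _ => ⟨hg s, mem_univ _⟩) heq ht

theorem euler_solution_starting_in_center_is_constant_general
    {L : Type*} [NormedAddCommGroup L] [NormedSpace ℝ L]
    (bracket : L →L[ℝ] L →L[ℝ] L)
    (φ : ℝ → L) (hφ : Continuous φ)
    (ξ : ℝ → L)
    (hξ : ∀ t : ℝ, HasDerivAt ξ (-(bracket (φ t) (ξ t))) t)
    (hcenter : ∀ x : L, bracket x (ξ 0) = 0) :
    ∀ t : ℝ, ξ t = ξ 0 := by
  have hconst : ∀ t, HasDerivAt (fun _ => ξ 0) (-(bracket (φ t) (ξ 0))) t := fun t => by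
    simpa [hcenter] using hasDerivAt_const t (ξ 0)
  exact congrFun <| ODE_linear_solution_unique (A := fun t => -bracket (φ t))
    (bracket.continuous.comp hφ).neg hξ hconst rfl

/-- Let `φ : ℝ → L` be continuous and let `ξ` be a solution of
the Euler system `ξ′(t) = −[φ(t), ξ(t)]` associated to `φ` on a
finite-dimensional real Lie algebra `L`, whose initial value `ξ(0)` lies in the
center of `L` (i.e. `[x, ξ(0)] = 0` for all `x`).  Then `ξ` is constant:
`ξ(t) = ξ(0)` for all `t ∈ ℝ`. -/
theorem euler_solution_starting_in_center_is_constant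
    {L : Type*} [NormedAddCommGroup L] [NormedSpace ℝ L] [FiniteDimensional ℝ L]
    (bracket : L →L[ℝ] L →L[ℝ] L)
    (halt : ∀ x : L, bracket x x = 0)
    (hjac : ∀ x y z : L,
      bracket x (bracket y z) + bracket y (bracket z x) + bracket z (bracket x y) = 0)
    (φ : ℝ → L) (hφ : Continuous φ)
    (ξ : ℝ → L)
    (hξ : ∀ t : ℝ, HasDerivAt ξ (-(bracket (φ t) (ξ t))) t)
    (hcenter : ∀ x : L, bracket x (ξ 0) = 0) :
    ∀ t : ℝ, ξ t = ξ 0 :=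
  euler_solution_starting_in_center_is_constant_general bracket φ hφ ξ hξ hcenter
end

section
/- Let U ⊆ ℝ² be open, let H₁, …, H_n : ℝ² → ℝ be differentiable functions, and let λ_{ij}^k (i,j,k = 1,…,n) be real constants such that {H_i, H_j}(z) = Σ_{k=1}^n λ_{ij}^k H_k(z) for all z ∈ U and all i,j. Let b₁, …, b_n : ℝ → ℝ be functions, let z(t) = (q(t), p(t)) be a differentiable curve taking values in U that is a solution of the time-dependent Hamiltonian system q′(t) = Σ_{i=1}^n b_i(t)(∂H_i/∂p)(z(t)), p′(t) = −Σ_{i=1}^n b_i(t)(∂H_i/∂q)(z(t)), and let p₁, …, p_n : ℝ → ℝ be differentiable functions satisfying p_k′(t) = −Σ_{i=1}^n Σ_{j=1}^n λ_{ij}^k b_i(t) p_j(t) for all k and t. Then the function t ↦ Σ_{k=1}^n p_k(t) H_k(z(t)) is constant on ℝ. -/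
/-- The Poisson bracket of two functions on `ℝ²` (coordinates `z = (q, p)`):
`{f, g}(z) = (∂f/∂p)(z)·(∂g/∂q)(z) − (∂f/∂q)(z)·(∂g/∂p)(z)`. -/
noncomputable def poissonBracket (f g : ℝ × ℝ → ℝ) (z : ℝ × ℝ) : ℝ :=
  fderiv ℝ f z (0, 1) * fderiv ℝ g z (1, 0) - fderiv ℝ f z (1, 0) * fderiv ℝ g z (0, 1)

/-!
Along the flow, `d/dt Hₖ(z) = Σᵢ bᵢ {Hᵢ, Hₖ}(z) = Σᵢⱼ λᵢₖʲ bᵢ Hⱼ(z)`: the vector `(Hₖ(z(t)))ₖ` solves a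
linear system whose matrix is minus the transpose of that of the Euler system for `(pₖ)ₖ`
(adjoint versus coadjoint action). Hence the derivative of the pairing `Σₖ pₖ Hₖ(z)` is a triple sum
that cancels after renaming the summation indices.
-/

open Finset

noncomputable def hamiltonianVectorField (g : ℝ × ℝ → ℝ) (z : ℝ × ℝ) : ℝ × ℝ :=
  (fderiv ℝ g z (0, 1), -fderiv ℝ g z (1, 0))

theorem fderiv_apply_hamiltonianVectorField (f g : ℝ × ℝ → ℝ) (z : ℝ × ℝ) :
    fderiv ℝ f z (hamiltonianVectorField g z) = poissonBracket g f z := by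
  have hX : hamiltonianVectorField g z =
      fderiv ℝ g z (0, 1) • ((1, 0) : ℝ × ℝ) + (-fderiv ℝ g z (1, 0)) • ((0, 1) : ℝ × ℝ) := by
    simp [hamiltonianVectorField]
  rw [hX, map_add, map_smul, map_smul, poissonBracket, smul_eq_mul, smul_eq_mul]
  ring

section

variable {ι : Type*} [Fintype ι]

theorem hasDerivAt_comp_of_hasDerivAt_sum_hamiltonianVectorField {f : ℝ × ℝ → ℝ}
    {H : ι → ℝ × ℝ → ℝ} {b : ι → ℝ → ℝ} {z : ℝ → ℝ × ℝ} {t : ℝ}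
    (hf : DifferentiableAt ℝ f (z t))
    (hz : HasDerivAt z (∑ i, b i t • hamiltonianVectorField (H i) (z t)) t) :
    HasDerivAt (fun s => f (z s)) (∑ i, b i t * poissonBracket (H i) f (z t)) t := by
  refine (hf.hasFDerivAt.comp_hasDerivAt t hz).congr_deriv ?_
  simp only [map_sum, map_smul, fderiv_apply_hamiltonianVectorField, smul_eq_mul]

theorem sum_coadjoint_mul_add_mul_adjoint_eq_zero (lam : ι → ι → ι → ℝ) (b P h : ι → ℝ) :
    ∑ k, (-(∑ i, ∑ j, lam i j k * b i * P j) * h k + P k * ∑ i, b i * ∑ j, lam i k j * h j) = 0 := by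
  simp only [sum_add_distrib, neg_mul, sum_neg_distrib, sum_mul, mul_sum]
  rw [neg_add_eq_zero, sum_comm]
  conv_rhs => rw [sum_comm]
  refine sum_congr rfl fun i _ => ?_
  rw [sum_comm]
  exact sum_congr rfl fun j _ => sum_congr rfl fun k _ => by ring

theorem hasDerivAt_sum_mul_of_coadjoint_of_adjoint {lam : ι → ι → ι → ℝ} {b P h : ι → ℝ → ℝ}
    {t : ℝ} (hP : ∀ k, HasDerivAt (P k) (-(∑ i, ∑ j, lam i j k * b i t * P j t)) t)
    (hh : ∀ k, HasDerivAt (h k) (∑ i, b i t * ∑ j, lam i k j * h j t) t) :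
    HasDerivAt (fun s => ∑ k, P k s * h k s) 0 t := by
  refine (HasDerivAt.fun_sum fun k _ => (hP k).mul (hh k)).congr_deriv ?_
  exact sum_coadjoint_mul_add_mul_adjoint_eq_zero lam (b · t) (P · t) (h · t)

end

theorem first_integral_from_euler_system_general
    {n : ℕ} (U : Set (ℝ × ℝ))
    (H : Fin n → ℝ × ℝ → ℝ) (hH : ∀ i, Differentiable ℝ (H i))
    (lam : Fin n → Fin n → Fin n → ℝ)
    (hlam : ∀ i j, ∀ z ∈ U,
      poissonBracket (H i) (H j) z = ∑ k, lam i j k * H k z)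
    (b : Fin n → ℝ → ℝ)
    (z : ℝ → ℝ × ℝ) (hzU : ∀ t : ℝ, z t ∈ U)
    (hz : ∀ t : ℝ, HasDerivAt z
      (∑ i, b i t • (fderiv ℝ (H i) (z t) (0, 1), -(fderiv ℝ (H i) (z t) (1, 0)))) t)
    (P : Fin n → ℝ → ℝ)
    (hP : ∀ k, ∀ t : ℝ, HasDerivAt (P k) (-(∑ i, ∑ j, lam i j k * b i t * P j t)) t) :
    ∀ t : ℝ, ∑ k, P k t * H k (z t) = ∑ k, P k 0 * H k (z 0) := by
  have hHz : ∀ k t, HasDerivAt (fun s => H k (z s)) (∑ i, b i t * ∑ j, lam i k j * H j (z t)) t :=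
    fun k t => by
      simpa only [hlam _ k _ (hzU t)] using
        hasDerivAt_comp_of_hasDerivAt_sum_hamiltonianVectorField (hH k (z t)) (hz t)
  have hconst : ∀ t, HasDerivAt (fun s => ∑ k, P k s * H k (z s)) 0 t := fun t =>
    hasDerivAt_sum_mul_of_coadjoint_of_adjoint (fun k => hP k t) (fun k => hHz k t)
  exact fun t => is_const_of_deriv_eq_zero (fun s => (hconst s).differentiableAt)
    (fun s => (hconst s).deriv) t 0

/-- Let `U ⊆ ℝ²` be open, `H₁, …, Hₙ : ℝ² → ℝ` differentiable
functions whose Poisson brackets close on `U` with structure constants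
`lam i j k`.  Let `z(t)` be a differentiable curve in `U` solving the
time-dependent Hamiltonian system `q′ = Σᵢ bᵢ(t) ∂Hᵢ/∂p`,
`p′ = −Σᵢ bᵢ(t) ∂Hᵢ/∂q`, and let `p₁, …, pₙ : ℝ → ℝ` satisfy
`pₖ′(t) = −Σᵢⱼ lam i j k · bᵢ(t) · pⱼ(t)`.  Then
`t ↦ Σₖ pₖ(t) Hₖ(z(t))` is constant on `ℝ`. -/
theorem first_integral_from_euler_system
    {n : ℕ} (U : Set (ℝ × ℝ)) (hU : IsOpen U)
    (H : Fin n → ℝ × ℝ → ℝ) (hH : ∀ i, Differentiable ℝ (H i))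
    (lam : Fin n → Fin n → Fin n → ℝ)
    (hlam : ∀ i j, ∀ z ∈ U,
      poissonBracket (H i) (H j) z = ∑ k, lam i j k * H k z)
    (b : Fin n → ℝ → ℝ)
    (z : ℝ → ℝ × ℝ) (hzU : ∀ t : ℝ, z t ∈ U)
    (hz : ∀ t : ℝ, HasDerivAt z
      (∑ i, b i t • (fderiv ℝ (H i) (z t) (0, 1), -(fderiv ℝ (H i) (z t) (1, 0)))) t)
    (P : Fin n → ℝ → ℝ)
    (hP : ∀ k, ∀ t : ℝ, HasDerivAt (P k) (-(∑ i, ∑ j, lam i j k * b i t * P j t)) t) :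
    ∀ t : ℝ, ∑ k, P k t * H k (z t) = ∑ k, P k 0 * H k (z 0) :=
  first_integral_from_euler_system_general U H hH lam hlam b z hzU hz P hP
end

section
/- Let c ∈ ℝ and define on the open set U = {(q,p) ∈ ℝ² : q > 0} the functions H₁(q,p) = (1/2)pq, H₂(q,p) = −(1/4)p² + (1/4)(q² − c/q²), and H₃(q,p) = −(1/4)p² − (1/4)(q² + c/q²). Then these functions satisfy on U the sp(1,ℝ) commutation relations for the Poisson bracket: {H₁, H₂} = −H₃, {H₂, H₃} = H₁, and {H₃, H₁} = H₂. -/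
/-- `H₁(q, p) = (1/2) p q`. -/
noncomputable def H₁ (z : ℝ × ℝ) : ℝ := (1 / 2) * z.2 * z.1

/-- `H₂(q, p) = −(1/4) p² + (1/4)(q² − c/q²)`. -/
noncomputable def H₂ (c : ℝ) (z : ℝ × ℝ) : ℝ :=
  -(1 / 4) * z.2 ^ 2 + (1 / 4) * (z.1 ^ 2 - c / z.1 ^ 2)

/-- `H₃(q, p) = −(1/4) p² − (1/4)(q² + c/q²)`. -/
noncomputable def H₃ (c : ℝ) (z : ℝ × ℝ) : ℝ :=
  -(1 / 4) * z.2 ^ 2 - (1 / 4) * (z.1 ^ 2 + c / z.1 ^ 2)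

open ContinuousLinearMap

theorem poissonBracket_eq_of_hasFDerivAt {f g : ℝ × ℝ → ℝ} {z : ℝ × ℝ} {fq fp gq gp : ℝ}
    (hf : HasFDerivAt f (fq • fst ℝ ℝ ℝ + fp • snd ℝ ℝ ℝ) z)
    (hg : HasFDerivAt g (gq • fst ℝ ℝ ℝ + gp • snd ℝ ℝ ℝ) z) :
    poissonBracket f g z = fp * gq - fq * gp := by
  simp [poissonBracket, hf.fderiv, hg.fderiv]

theorem hasFDerivAt_quadratic_add_div_sq (α β γ : ℝ) {z : ℝ × ℝ} (hz : z.1 ≠ 0) :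
    HasFDerivAt (fun z : ℝ × ℝ => α * z.2 ^ 2 + β * z.1 ^ 2 + γ / z.1 ^ 2)
      ((2 * β * z.1 - 2 * γ / z.1 ^ 3) • fst ℝ ℝ ℝ + (2 * α * z.2) • snd ℝ ℝ ℝ) z := by
  have hq : HasFDerivAt (fun z : ℝ × ℝ => z.1) (fst ℝ ℝ ℝ) z := hasFDerivAt_fst
  have hp : HasFDerivAt (fun z : ℝ × ℝ => z.2) (snd ℝ ℝ ℝ) z := hasFDerivAt_snd
  have hinv := ((hasDerivAt_inv (pow_ne_zero 2 hz)).comp_hasFDerivAt z (hq.pow 2)).const_mul γ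
  have h := (((hp.pow 2).const_mul α).add ((hq.pow 2).const_mul β)).add hinv
  simp only [Function.comp_def, ← div_eq_mul_inv] at h
  refine h.congr_fderiv ?_
  ext <;> simp <;> grind

theorem hasFDerivAt_H₁ (z : ℝ × ℝ) :
    HasFDerivAt H₁ ((z.2 / 2) • fst ℝ ℝ ℝ + (z.1 / 2) • snd ℝ ℝ ℝ) z := by
  have hq : HasFDerivAt (fun z : ℝ × ℝ => z.1) (fst ℝ ℝ ℝ) z := hasFDerivAt_fst
  have hp : HasFDerivAt (fun z : ℝ × ℝ => z.2) (snd ℝ ℝ ℝ) z := hasFDerivAt_snd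
  refine ((hp.const_mul (1 / 2 : ℝ)).mul hq).congr_fderiv ?_
  ext <;> simp <;> ring

theorem H₂_eq (c : ℝ) :
    H₂ c = fun z : ℝ × ℝ => -(1 / 4) * z.2 ^ 2 + 1 / 4 * z.1 ^ 2 + -(c / 4) / z.1 ^ 2 := by
  ext z
  simp only [H₂]
  ring

theorem H₃_eq (c : ℝ) :
    H₃ c = fun z : ℝ × ℝ => -(1 / 4) * z.2 ^ 2 + -(1 / 4) * z.1 ^ 2 + -(c / 4) / z.1 ^ 2 := by
  ext z
  simp only [H₃]
  ring

/-- On the open set `U = {(q, p) : q > 0}`, the Hamiltonian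
functions `H₁, H₂, H₃` of the Milne–Pinney system satisfy the `sp(1, ℝ)`
commutation relations for the Poisson bracket:
`{H₁, H₂} = −H₃`, `{H₂, H₃} = H₁`, `{H₃, H₁} = H₂`. -/
theorem milne_pinney_sp1_commutation_relations (c : ℝ) :
    ∀ q p : ℝ, 0 < q →
      poissonBracket H₁ (H₂ c) (q, p) = -(H₃ c (q, p)) ∧
      poissonBracket (H₂ c) (H₃ c) (q, p) = H₁ (q, p) ∧
      poissonBracket (H₃ c) H₁ (q, p) = H₂ c (q, p) := by
  intro q p hq
  have d₁ := hasFDerivAt_H₁ (q, p)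
  have d₂ := H₂_eq c ▸ hasFDerivAt_quadratic_add_div_sq _ _ _ (z := (q, p)) hq.ne'
  have d₃ := H₃_eq c ▸ hasFDerivAt_quadratic_add_div_sq _ _ _ (z := (q, p)) hq.ne'
  rw [poissonBracket_eq_of_hasFDerivAt d₁ d₂, poissonBracket_eq_of_hasFDerivAt d₂ d₃,
    poissonBracket_eq_of_hasFDerivAt d₃ d₁]
  simp only [H₁, H₂, H₃]
  refine ⟨?_, ?_, ?_⟩ <;> field_simp <;> ring
end

section
/- Let c > 0, let ω : ℝ → ℝ be a function, and set α(t) = 1 − ω(t)² and β(t) = 1 + ω(t)². Let q, p : ℝ → ℝ be differentiable with q(t) > 0 for all t, solving the Milne–Pinney system q′(t) = p(t), p′(t) = −ω(t)² q(t) + c/q(t)³, and let ξ = (ξ₁, ξ₂, ξ₃) : ℝ → ℝ³ be differentiable with ξ₁′(t) = −β(t)ξ₂(t) + α(t)ξ₃(t), ξ₂′(t) = β(t)ξ₁(t), ξ₃′(t) = α(t)ξ₁(t). Define I(t, q, p) = 2pq·ξ₁(t) + (q² − p² − c/q²)·ξ₂(t) − (q² + p² + c/q²)·ξ₃(t). Then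 the function t ↦ I(t, q(t), p(t)) is constant on ℝ; moreover, if ξ is 2π-periodic then for each fixed (q,p) with q > 0 the function t ↦ I(t, q, p) is 2π-periodic. -/
/-!
Both `ξ` and the momentum `J = (2pq, q² − p² − c/q², q² + p² + c/q²)` of a Milne–Pinney
trajectory solve the same linear Euler system on `sp(1, ℝ)`, and this system preserves the
Lorentzian form `x₁y₁ + x₂y₂ − x₃y₃` (its matrix is skew for that form).  Since
`I(t, q(t), p(t))` is exactly this form evaluated on `ξ(t)` and `J(t)`, it is constant.
-/

def IsEulerSolution (α β x₁ x₂ x₃ : ℝ → ℝ) : Prop :=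
  ∀ t, HasDerivAt x₁ (-β t * x₂ t + α t * x₃ t) t ∧ HasDerivAt x₂ (β t * x₁ t) t ∧
    HasDerivAt x₃ (α t * x₁ t) t

namespace IsEulerSolution

variable {α β x₁ x₂ x₃ y₁ y₂ y₃ : ℝ → ℝ}

theorem hasDerivAt_pairing (hx : IsEulerSolution α β x₁ x₂ x₃)
    (hy : IsEulerSolution α β y₁ y₂ y₃) (t : ℝ) :
    HasDerivAt (fun s => x₁ s * y₁ s + x₂ s * y₂ s - x₃ s * y₃ s) 0 t := by
  obtain ⟨hx₁, hx₂, hx₃⟩ := hx t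
  obtain ⟨hy₁, hy₂, hy₃⟩ := hy t
  refine (((hx₁.fun_mul hy₁).fun_add (hx₂.fun_mul hy₂)).fun_sub
    (hx₃.fun_mul hy₃)).congr_deriv ?_
  ring

theorem pairing_eq (hx : IsEulerSolution α β x₁ x₂ x₃)
    (hy : IsEulerSolution α β y₁ y₂ y₃) (t s : ℝ) :
    x₁ t * y₁ t + x₂ t * y₂ t - x₃ t * y₃ t = x₁ s * y₁ s + x₂ s * y₂ s - x₃ s * y₃ s :=
  is_const_of_deriv_eq_zero (fun r => (hasDerivAt_pairing hx hy r).differentiableAt)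
    (fun r => (hasDerivAt_pairing hx hy r).deriv) t s

end IsEulerSolution

theorem isEulerSolution_milnePinney_momentum {c : ℝ} {ω q p : ℝ → ℝ} (hq0 : ∀ t, q t ≠ 0)
    (hq : ∀ t, HasDerivAt q (p t) t)
    (hp : ∀ t, HasDerivAt p (-(ω t) ^ 2 * q t + c / q t ^ 3) t) :
    IsEulerSolution (fun t => 1 - ω t ^ 2) (fun t => 1 + ω t ^ 2)
      (fun t => 2 * p t * q t) (fun t => q t ^ 2 - p t ^ 2 - c / q t ^ 2)
      (fun t => q t ^ 2 + p t ^ 2 + c / q t ^ 2) := by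
  intro t
  have hqt := hq0 t
  have hq2 : HasDerivAt (fun s => q s ^ 2) (2 * q t * p t) t := by
    simpa using (hq t).fun_pow 2
  have hp2 : HasDerivAt (fun s => p s ^ 2) (2 * p t * (-(ω t) ^ 2 * q t + c / q t ^ 3)) t := by
    simpa using (hp t).fun_pow 2
  have hcq2 : HasDerivAt (fun s => c / q s ^ 2) (-(c * (2 * q t * p t)) / (q t ^ 2) ^ 2) t := by
    simpa using (hasDerivAt_const t c).fun_div hq2 (pow_ne_zero 2 hqt)
  refine ⟨?_, ?_, ?_⟩
  · refine (((hp t).const_mul 2).fun_mul (hq t)).congr_deriv ?_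
    field_simp
    ring
  · refine ((hq2.fun_sub hp2).fun_sub hcq2).congr_deriv ?_
    field_simp
    ring
  · refine ((hq2.fun_add hp2).fun_add hcq2).congr_deriv ?_
    field_simp
    ring

theorem milne_pinney_first_integral_general
    (c : ℝ) (ω : ℝ → ℝ)
    (q p : ℝ → ℝ) (hq0 : ∀ t : ℝ, 0 < q t)
    (hq : ∀ t : ℝ, HasDerivAt q (p t) t)
    (hp : ∀ t : ℝ, HasDerivAt p (-(ω t) ^ 2 * q t + c / q t ^ 3) t)
    (ξ₁ ξ₂ ξ₃ : ℝ → ℝ)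
    (h₁ : ∀ t : ℝ, HasDerivAt ξ₁
      (-(1 + (ω t) ^ 2) * ξ₂ t + (1 - (ω t) ^ 2) * ξ₃ t) t)
    (h₂ : ∀ t : ℝ, HasDerivAt ξ₂ ((1 + (ω t) ^ 2) * ξ₁ t) t)
    (h₃ : ∀ t : ℝ, HasDerivAt ξ₃ ((1 - (ω t) ^ 2) * ξ₁ t) t)
    (I : ℝ → ℝ → ℝ → ℝ)
    (hI : ∀ t a b : ℝ, I t a b =
      2 * b * a * ξ₁ t + (a ^ 2 - b ^ 2 - c / a ^ 2) * ξ₂ t -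
        (a ^ 2 + b ^ 2 + c / a ^ 2) * ξ₃ t) :
    (∀ t : ℝ, I t (q t) (p t) = I 0 (q 0) (p 0)) ∧
      ((∀ t : ℝ, ξ₁ (t + 2 * Real.pi) = ξ₁ t ∧ ξ₂ (t + 2 * Real.pi) = ξ₂ t ∧
          ξ₃ (t + 2 * Real.pi) = ξ₃ t) →
        ∀ a b : ℝ, 0 < a → ∀ t : ℝ, I (t + 2 * Real.pi) a b = I t a b) := by
  refine ⟨fun t => ?_, fun hper a b _ t => ?_⟩
  · have hξ : IsEulerSolution (fun t => 1 - ω t ^ 2) (fun t => 1 + ω t ^ 2) ξ₁ ξ₂ ξ₃ :=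
      fun t => ⟨h₁ t, h₂ t, h₃ t⟩
    have hJ := isEulerSolution_milnePinney_momentum (fun t => (hq0 t).ne') hq hp
    rw [hI, hI]
    linear_combination hξ.pairing_eq hJ t 0
  · obtain ⟨e₁, e₂, e₃⟩ := hper t
    rw [hI, hI, e₁, e₂, e₃]

/-- Let `c > 0`, `ω : ℝ → ℝ`, and set `α(t) = 1 − ω(t)²`,
`β(t) = 1 + ω(t)²`.  Let `(q, p)` solve the Milne–Pinney system
`q′ = p`, `p′ = −ω² q + c/q³` with `q > 0`, and let `ξ = (ξ₁, ξ₂, ξ₃)` solve the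
Euler system `ξ₁′ = −β ξ₂ + α ξ₃`, `ξ₂′ = β ξ₁`, `ξ₃′ = α ξ₁` on `sp(1, ℝ)`.
Define `I(t, q, p) = 2pq·ξ₁(t) + (q² − p² − c/q²)·ξ₂(t) − (q² + p² + c/q²)·ξ₃(t)`.
Then `t ↦ I(t, q(t), p(t))` is constant on `ℝ`; moreover, if `ξ` is
`2π`-periodic then for each fixed `(q, p)` with `q > 0` the function
`t ↦ I(t, q, p)` is `2π`-periodic. -/
theorem milne_pinney_first_integral
    (c : ℝ) (hc : 0 < c) (ω : ℝ → ℝ)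
    (q p : ℝ → ℝ) (hq0 : ∀ t : ℝ, 0 < q t)
    (hq : ∀ t : ℝ, HasDerivAt q (p t) t)
    (hp : ∀ t : ℝ, HasDerivAt p (-(ω t) ^ 2 * q t + c / q t ^ 3) t)
    (ξ₁ ξ₂ ξ₃ : ℝ → ℝ)
    (h₁ : ∀ t : ℝ, HasDerivAt ξ₁
      (-(1 + (ω t) ^ 2) * ξ₂ t + (1 - (ω t) ^ 2) * ξ₃ t) t)
    (h₂ : ∀ t : ℝ, HasDerivAt ξ₂ ((1 + (ω t) ^ 2) * ξ₁ t) t)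
    (h₃ : ∀ t : ℝ, HasDerivAt ξ₃ ((1 - (ω t) ^ 2) * ξ₁ t) t)
    (I : ℝ → ℝ → ℝ → ℝ)
    (hI : ∀ t a b : ℝ, I t a b =
      2 * b * a * ξ₁ t + (a ^ 2 - b ^ 2 - c / a ^ 2) * ξ₂ t -
        (a ^ 2 + b ^ 2 + c / a ^ 2) * ξ₃ t) :
    (∀ t : ℝ, I t (q t) (p t) = I 0 (q 0) (p 0)) ∧
      ((∀ t : ℝ, ξ₁ (t + 2 * Real.pi) = ξ₁ t ∧ ξ₂ (t + 2 * Real.pi) = ξ₂ t ∧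
          ξ₃ (t + 2 * Real.pi) = ξ₃ t) →
        ∀ a b : ℝ, 0 < a → ∀ t : ℝ, I (t + 2 * Real.pi) a b = I t a b) :=
  milne_pinney_first_integral_general c ω q p hq0 hq hp ξ₁ ξ₂ ξ₃ h₁ h₂ h₃ I hI
end
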